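/- Postponement of internal parallel reduction: if M ⇛ⁱ L and L head-β_v-reduces (resp. head-σ-reduces) in one step to N, then there exists L' such that M head-β_v-reduces (resp. head-σ-reduces) in one step to L' and L' ⇒ N. -/
import Mathlib


/-- Terms of the call-by-value λ-calculus, in de Bruijn notation. -/
inductive Term : Type
  | var : ℕ → Term
  | lam : Term → Term
  | app : Term → Term → Term

namespace Term

/-- Values are variables and abstractions. -/
def isValue : Term → Prop
  | var _ => True
  | lam _ => True
  | app _ _ => False

/-- Shift free de Bruijn indices ≥ d by one. -/
def lift (d : ℕ) : Term → Term
  | var n => if n < d then var n else var (n+1)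
  | lam M => lam (lift (d+1) M)
  | app M N => app (lift d M) (lift d N)

/-- Capture-avoiding substitution of `V` for index `k`. -/
def subst : Term → ℕ → Term → Term
  | var n, k, V => if n = k then V else if k < n then var (n-1) else var n
  | lam M, k, V => lam (subst M (k+1) (lift 0 V))
  | app M N, k, V => app (subst M k V) (subst N k V)

/-- Apply a term to a list of arguments: `appList M [M₁,…,Mₘ] = M M₁ … Mₘ`. -/
def appList : Term → List Term → Term
  | M, [] => M
  | M, N :: Ns => appList (app M N) Ns

/-- Root σ-reduction rules σ₁ and σ₃ (freshness handled by lifting). -/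
inductive SigmaBase : Term → Term → Prop
  | sigma1 (M N L : Term) :
      SigmaBase (app (app (lam M) N) L) (app (lam (app M (lift 0 L))) N)
  | sigma3 (V L N : Term) : isValue V →
      SigmaBase (app V (app (lam L) N)) (app (lam (app (lift 0 V) L)) N)

/-- Root rules of v-reduction: β_v, σ₁ and σ₃. -/
inductive VBase : Term → Term → Prop
  | beta (M V : Term) : isValue V → VBase (app (lam M) V) (subst M 0 V)
  | sigma1 (M N L : Term) :
      VBase (app (app (lam M) N) L) (app (lam (app M (lift 0 L))) N)
  | sigma3 (V L N : Term) : isValue V →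
      VBase (app V (app (lam L) N)) (app (lam (app (lift 0 V) L)) N)

/-- Contextual closure of a root relation. -/
inductive Ctx (r : Term → Term → Prop) : Term → Term → Prop
  | base {M M'} : r M M' → Ctx r M M'
  | lam {M M'} : Ctx r M M' → Ctx r (lam M) (lam M')
  | appL {M M'} (N : Term) : Ctx r M M' → Ctx r (app M N) (app M' N)
  | appR (M : Term) {N N'} : Ctx r N N' → Ctx r (app M N) (app M N')

/-- σ-reduction: contextual closure of σ₁ ∪ σ₃. -/
def SigmaRed : Term → Term → Prop := Ctx SigmaBase

/-- v-reduction: contextual closure of β_v ∪ σ₁ ∪ σ₃. -/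
def Red : Term → Term → Prop := Ctx VBase

/-- Head β_v-reduction. -/
inductive HeadBeta : Term → Term → Prop
  | beta (M V : Term) (Ms : List Term) : isValue V →
      HeadBeta (appList (app (lam M) V) Ms) (appList (subst M 0 V) Ms)
  | right (V : Term) {N N'} (Ms : List Term) : isValue V → HeadBeta N N' →
      HeadBeta (appList (app V N) Ms) (appList (app V N') Ms)

/-- Head σ-reduction. -/
inductive HeadSigma : Term → Term → Prop
  | sigma1 (M N L : Term) (Ms : List Term) :
      HeadSigma (appList (app (app (lam M) N) L) Ms)
                (appList (app (lam (app M (lift 0 L))) N) Ms)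
  | sigma3 (V L N : Term) (Ms : List Term) : isValue V →
      HeadSigma (appList (app V (app (lam L) N)) Ms)
                (appList (app (lam (app (lift 0 V) L)) N) Ms)
  | right (V : Term) {N N'} (Ms : List Term) : isValue V → HeadSigma N N' →
      HeadSigma (appList (app V N) Ms) (appList (app V N') Ms)

/-- Head v-reduction: head β_v ∪ head σ. -/
def HeadRed (M N : Term) : Prop := HeadBeta M N ∨ HeadSigma M N

/-- Internal v-reduction: v-steps that are not head v-steps. -/
def IntRed (M N : Term) : Prop := Red M N ∧ ¬ HeadRed M N

/-- Parallel reduction of the shuffling calculus λ_v^σ. -/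
inductive Par : Term → Term → Prop
  | var (x : ℕ) {Ms Ms' : List Term} : List.Forall₂ Par Ms Ms' →
      Par (appList (var x) Ms) (appList (var x) Ms')
  | lam {M M'} {Ms Ms' : List Term} : Par M M' → List.Forall₂ Par Ms Ms' →
      Par (appList (lam M) Ms) (appList (lam M') Ms')
  | beta {M M' V V'} {Ms Ms' : List Term} : isValue V → isValue V' →
      Par M M' → Par V V' → List.Forall₂ Par Ms Ms' →
      Par (appList (app (lam M) V) Ms) (appList (subst M' 0 V') Ms')
  | sigma1 {M M' N N' L L'} {Ms Ms' : List Term} :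
      Par M M' → Par N N' → Par L L' → List.Forall₂ Par Ms Ms' →
      Par (appList (app (app (lam M) N) L) Ms)
          (appList (app (lam (app M' (lift 0 L'))) N') Ms')
  | sigma3 {V V' L L' N N'} {Ms Ms' : List Term} : isValue V → isValue V' →
      Par V V' → Par L L' → Par N N' → List.Forall₂ Par Ms Ms' →
      Par (appList (app V (app (lam L) N)) Ms)
          (appList (app (lam (app (lift 0 V') L')) N') Ms')

/-- Internal parallel reduction. -/
inductive IPar : Term → Term → Prop
  | lam {N N'} : Par N N' → IPar (lam N) (lam N')
  | var (x : ℕ) : IPar (var x) (var x)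
  | right {V V' N N'} {Ms Ms' : List Term} : isValue V → isValue V' →
      Par V V' → IPar N N' → List.Forall₂ Par Ms Ms' →
      IPar (appList (app V N) Ms) (appList (app V' N') Ms')

/-- One-hole contexts. -/
inductive Ctx1 : Type
  | hole : Ctx1
  | lam : Ctx1 → Ctx1
  | appL : Ctx1 → Term → Ctx1
  | appR : Term → Ctx1 → Ctx1

/-- Capture-allowing hole filling. -/
def fill : Ctx1 → Term → Term
  | .hole, M => M
  | .lam C, M => lam (fill C M)
  | .appL C N, M => app (fill C M) N
  | .appR N C, M => app N (fill C M)

/-- `M` halts: head β_v-reduction from `M` reaches a value. -/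
def Halts (M : Term) : Prop := ∃ V, isValue V ∧ Relation.ReflTransGen HeadBeta M V

end Term

namespace Term

/-! ### Arithmetic lemmas about lift and subst -/

theorem lift_lift_le (M : Term) : ∀ i j, i ≤ j →
    lift i (lift j M) = lift (j+1) (lift i M) := by
  induction M with
  | var n =>
    intro i j hij
    simp only [lift]; split_ifs <;> simp only [lift] <;> split_ifs <;>
      first | rfl | omega | (congr 1; omega)
  | lam M ih => intro i j hij; simp only [lift]; rw [ih (i+1) (j+1) (by omega)]
  | app A B ihA ihB => intro i j hij; simp only [lift]; rw [ihA _ _ hij, ihB _ _ hij]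

theorem lift_subst_low (M : Term) : ∀ d k (V : Term), d ≤ k →
    lift d (subst M k V) = subst (lift d M) (k+1) (lift d V) := by
  induction M with
  | var n =>
    intro d k V hdk
    simp only [lift, subst]; split_ifs <;> simp only [lift, subst] <;> split_ifs <;>
      first | rfl | omega | (congr 1; omega)
  | lam M ih =>
    intro d k V hdk
    simp only [lift, subst]
    rw [ih (d+1) (k+1) (lift 0 V) (by omega), lift_lift_le V 0 d (by omega)]
  | app A B ihA ihB =>
    intro d k V hdk
    simp only [lift, subst]; rw [ihA _ _ _ hdk, ihB _ _ _ hdk]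

theorem lift_subst_high (M : Term) : ∀ d k (V : Term), k ≤ d →
    lift d (subst M k V) = subst (lift (d+1) M) k (lift d V) := by
  induction M with
  | var n =>
    intro d k V hkd
    simp only [lift, subst]; split_ifs <;> simp only [lift, subst] <;> split_ifs <;>
      first | rfl | omega | (congr 1; omega)
  | lam M ih =>
    intro d k V hkd
    simp only [lift, subst]
    rw [ih (d+1) (k+1) (lift 0 V) (by omega), lift_lift_le V 0 d (by omega)]
  | app A B ihA ihB =>
    intro d k V hkd
    simp only [lift, subst]; rw [ihA _ _ _ hkd, ihB _ _ _ hkd]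

theorem subst_lift (V : Term) : ∀ j X, subst (lift j V) j X = V := by
  induction V with
  | var n =>
    intro j X
    simp only [lift]; split_ifs <;> simp only [subst] <;> split_ifs <;>
      first | rfl | omega | (congr 1; omega)
  | lam M ih => intro j X; simp only [lift, subst]; rw [ih]
  | app A B ihA ihB => intro j X; simp only [lift, subst]; rw [ihA, ihB]

theorem subst_subst (M : Term) : ∀ j k (W V : Term), j ≤ k →
    subst (subst M j W) k V = subst (subst M (k+1) (lift j V)) j (subst W k V) := by
  induction M with
  | var n =>
    intro j k W V hjk
    simp only [subst]; split_ifs <;> (try simp only [subst]) <;> (try split_ifs) <;>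
      first | rfl | omega | (congr 1; omega) | (rw [subst_lift])
  | lam M ih =>
    intro j k W V hjk
    simp only [subst]
    rw [ih (j+1) (k+1) (lift 0 W) (lift 0 V) (by omega),
        lift_lift_le V 0 j (by omega), lift_subst_low W 0 k V (by omega)]
  | app A B ihA ihB =>
    intro j k W V hjk
    simp only [subst]; rw [ihA _ _ _ _ hjk, ihB _ _ _ _ hjk]

/-! ### Values -/

theorem isValue_lift {V : Term} (h : isValue V) (d : ℕ) : isValue (lift d V) := by
  cases V with
  | var n => simp only [lift]; split_ifs <;> trivial
  | lam M => trivial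
  | app A B => exact h.elim

theorem isValue_subst {V : Term} (h : isValue V) (k : ℕ) {W : Term} (hW : isValue W) :
    isValue (subst V k W) := by
  cases V with
  | var n => simp only [subst]; split_ifs <;> first | exact hW | trivial
  | lam M => trivial
  | app A B => exact h.elim

theorem value_not_app {H : Term} (h : isValue H) : ∀ A B, H ≠ app A B := by
  cases H <;> intro A B hEq <;> first | exact Term.noConfusion hEq | exact h.elim

/-! ### appList lemmas -/

theorem appList_append (M : Term) (Xs Ys : List Term) :
    appList M (Xs ++ Ys) = appList (appList M Xs) Ys := by
  induction Xs generalizing M with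
  | nil => rfl
  | cons X Xs ih => exact ih (app M X)

theorem appList_snoc (M : Term) (Ms : List Term) (N : Term) :
    appList M (Ms ++ [N]) = app (appList M Ms) N := by
  rw [appList_append]; rfl

theorem appList_app_ex (A B : Term) (Ms : List Term) :
    ∃ C D, appList (app A B) Ms = app C D := by
  induction Ms generalizing A B with
  | nil => exact ⟨A, B, rfl⟩
  | cons X Xs ih => exact ih (app A B) X

theorem spine_eq {H H' : Term} (hH : ∀ A B, H ≠ app A B) (hH' : ∀ A B, H' ≠ app A B) :
    ∀ Xs Ys : List Term, appList H Xs = appList H' Ys → H = H' ∧ Xs = Ys := by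
  intro Xs
  induction Xs using List.reverseRecOn with
  | nil =>
    intro Ys
    induction Ys using List.reverseRecOn with
    | nil => intro h; exact ⟨h, rfl⟩
    | append_singleton Ys Y _ =>
      intro h
      rw [appList_snoc] at h
      exact absurd h (hH _ _)
  | append_singleton Xs X ih =>
    intro Ys
    induction Ys using List.reverseRecOn with
    | nil =>
      intro h
      rw [appList_snoc] at h
      exact absurd h.symm (hH' _ _)
    | append_singleton Ys Y _ =>
      intro h
      rw [appList_snoc, appList_snoc] at h
      injection h with h1 h2
      obtain ⟨e1, e2⟩ := ih Ys h1
      exact ⟨e1, by rw [e2, h2]⟩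

theorem spine_eq_cons {V V' A A' : Term} {Ms Ms' : List Term}
    (hV : isValue V) (hV' : isValue V')
    (h : appList (app V A) Ms = appList (app V' A') Ms') :
    V = V' ∧ A = A' ∧ Ms = Ms' := by
  obtain ⟨e1, e2⟩ := spine_eq (value_not_app hV) (value_not_app hV') (A::Ms) (A'::Ms') h
  injection e2 with e3 e4
  exact ⟨e1, e3, e4⟩

theorem lift_appList (d : ℕ) (H : Term) (Ms : List Term) :
    lift d (appList H Ms) = appList (lift d H) (Ms.map (lift d)) := by
  induction Ms generalizing H with
  | nil => rfl
  | cons X Xs ih => exact ih (app H X)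

theorem subst_appList (H : Term) (Ms : List Term) (k : ℕ) (V : Term) :
    subst (appList H Ms) k V = appList (subst H k V) (Ms.map (fun m => subst m k V)) := by
  induction Ms generalizing H with
  | nil => rfl
  | cons X Xs ih => exact ih (app H X)

/-! ### Custom induction principle for the nested inductive Par -/

theorem Par.ind2 {motive : Term → Term → Prop}
    (hvar : ∀ (x : ℕ) (Ms Ms' : List Term),
      List.Forall₂ (fun a b => Par a b ∧ motive a b) Ms Ms' →
      motive (appList (Term.var x) Ms) (appList (Term.var x) Ms'))
    (hlam : ∀ (M M' : Term) (Ms Ms' : List Term), Par M M' → motive M M' →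
      List.Forall₂ (fun a b => Par a b ∧ motive a b) Ms Ms' →
      motive (appList (Term.lam M) Ms) (appList (Term.lam M') Ms'))
    (hbeta : ∀ (M M' V V' : Term) (Ms Ms' : List Term), isValue V → isValue V' →
      Par M M' → motive M M' → Par V V' → motive V V' →
      List.Forall₂ (fun a b => Par a b ∧ motive a b) Ms Ms' →
      motive (appList (app (Term.lam M) V) Ms) (appList (subst M' 0 V') Ms'))
    (hsigma1 : ∀ (M M' N N' L L' : Term) (Ms Ms' : List Term),
      Par M M' → motive M M' → Par N N' → motive N N' → Par L L' → motive L L' →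
      List.Forall₂ (fun a b => Par a b ∧ motive a b) Ms Ms' →
      motive (appList (app (app (Term.lam M) N) L) Ms)
             (appList (app (Term.lam (app M' (lift 0 L'))) N') Ms'))
    (hsigma3 : ∀ (V V' L L' N N' : Term) (Ms Ms' : List Term), isValue V → isValue V' →
      Par V V' → motive V V' → Par L L' → motive L L' → Par N N' → motive N N' →
      List.Forall₂ (fun a b => Par a b ∧ motive a b) Ms Ms' →
      motive (appList (app V (app (Term.lam L) N)) Ms)
             (appList (app (Term.lam (app (lift 0 V') L')) N') Ms'))
    {M N : Term} (h : Par M N) : motive M N := by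
  refine Par.rec (motive_1 := fun M N _ => motive M N)
    (motive_2 := fun Ms Ms' _ => List.Forall₂ (fun a b => Par a b ∧ motive a b) Ms Ms')
    ?_ ?_ ?_ ?_ ?_ ?_ ?_ h
  · intro x Ms Ms' a ih; exact hvar x Ms Ms' ih
  · intro M M' Ms Ms' a a1 ih1 ih2; exact hlam M M' Ms Ms' a ih1 ih2
  · intro M M' V V' Ms Ms' a a1 a2 a3 a4 ih1 ih2 ih3
    exact hbeta M M' V V' Ms Ms' a a1 a2 ih1 a3 ih2 ih3
  · intro M M' N N' L L' Ms Ms' a a1 a2 a3 ih1 ih2 ih3 ih4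
    exact hsigma1 M M' N N' L L' Ms Ms' a ih1 a1 ih2 a2 ih3 ih4
  · intro V V' L L' N N' Ms Ms' a a1 a2 a3 a4 a5 ih1 ih2 ih3 ih4
    exact hsigma3 V V' L L' N N' Ms Ms' a a1 a2 ih1 a3 ih2 a4 ih3 ih4
  · exact List.Forall₂.nil
  · intro a b l1 l2 a1 a2 ih1 ih2; exact List.Forall₂.cons ⟨a1, ih1⟩ ih2

theorem forall₂_append {R : Term → Term → Prop} {As Bs Cs Ds : List Term}
    (h1 : List.Forall₂ R As Bs) (h2 : List.Forall₂ R Cs Ds) :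
    List.Forall₂ R (As ++ Cs) (Bs ++ Ds) := by
  induction h1 with
  | nil => exact h2
  | cons ha _ ih => exact .cons ha ih

theorem forall₂_map {R : Term → Term → Prop} {f g : Term → Term} {Ms Ms' : List Term}
    (h : List.Forall₂ R Ms Ms') (hfg : ∀ a b, R a b → Par (f a) (g b)) :
    List.Forall₂ Par (Ms.map f) (Ms'.map g) := by
  induction h with
  | nil => exact .nil
  | cons h1 _ ih => exact .cons (hfg _ _ h1) ih

/-! ### Basic Par lemmas -/

theorem Par.appList_ext {A A' : Term} (h : Par A A') {Ms Ms' : List Term}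
    (hMs : List.Forall₂ Par Ms Ms') : Par (appList A Ms) (appList A' Ms') := by
  cases h with
  | var x hKs =>
    rw [← appList_append, ← appList_append]; exact Par.var x (forall₂_append hKs hMs)
  | lam hM hKs =>
    rw [← appList_append, ← appList_append]; exact Par.lam hM (forall₂_append hKs hMs)
  | beta h1 h2 h3 h4 hKs =>
    rw [← appList_append, ← appList_append]; exact Par.beta h1 h2 h3 h4 (forall₂_append hKs hMs)
  | sigma1 h1 h2 h3 hKs =>
    rw [← appList_append, ← appList_append]; exact Par.sigma1 h1 h2 h3 (forall₂_append hKs hMs)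
  | sigma3 h1 h2 h3 h4 h5 hKs =>
    rw [← appList_append, ← appList_append]; exact Par.sigma3 h1 h2 h3 h4 h5 (forall₂_append hKs hMs)

theorem par_app {A A' B B' : Term} (h1 : Par A A') (h2 : Par B B') :
    Par (app A B) (app A' B') :=
  h1.appList_ext (.cons h2 .nil)

theorem par_refl : ∀ M : Term, Par M M := by
  intro M
  induction M with
  | var n => exact Par.var n .nil
  | lam M ih => exact Par.lam ih .nil
  | app A B ihA ihB => exact par_app ihA ihB

theorem not_isValue_appList_cons {H X : Term} {Xs : List Term} :
    ¬ isValue (appList H (X :: Xs)) := by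
  obtain ⟨C, D, hCD⟩ := appList_app_ex H X Xs
  intro h
  simp only [appList] at h
  rw [hCD] at h
  exact h

theorem par_value_inv {V X : Term} (hV : isValue V) (h : Par V X) :
    (∃ x, V = Term.var x ∧ X = Term.var x) ∨
      ∃ B B', V = Term.lam B ∧ X = Term.lam B' ∧ Par B B' := by
  cases h with
  | var x hMs =>
    cases hMs with
    | nil => exact .inl ⟨x, rfl, rfl⟩
    | cons h1 h2 => exact absurd hV not_isValue_appList_cons
  | lam hM hMs =>
    cases hMs with
    | nil => exact .inr ⟨_, _, rfl, rfl, hM⟩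
    | cons h1 h2 => exact absurd hV not_isValue_appList_cons
  | beta h1 h2 h3 h4 hMs =>
    obtain ⟨C, D, hCD⟩ := appList_app_ex _ _ _
    rw [hCD] at hV; exact hV.elim
  | sigma1 h1 h2 h3 hMs =>
    obtain ⟨C, D, hCD⟩ := appList_app_ex _ _ _
    rw [hCD] at hV; exact hV.elim
  | sigma3 h1 h2 h3 h4 h5 hMs =>
    obtain ⟨C, D, hCD⟩ := appList_app_ex _ _ _
    rw [hCD] at hV; exact hV.elim

theorem par_value_head {V V' A A' : Term} {Ms Ms' : List Term} (hV : isValue V)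
    (hVV' : Par V V') (hA : Par A A') (hMs : List.Forall₂ Par Ms Ms') :
    Par (appList (app V A) Ms) (appList (app V' A') Ms') := by
  rcases par_value_inv hV hVV' with ⟨x, rfl, rfl⟩ | ⟨B, B', rfl, rfl, hB⟩
  · exact Par.var x (.cons hA hMs)
  · exact Par.lam hB (.cons hA hMs)

/-! ### Par is preserved by lift and subst -/

theorem Par.lift_par {M N : Term} (h : Par M N) : ∀ d, Par (lift d M) (lift d N) := by
  refine Par.ind2 (motive := fun M N => ∀ d, Par (lift d M) (lift d N))
    ?_ ?_ ?_ ?_ ?_ h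
  · intro x Ms Ms' hMs
    intro d
    rw [lift_appList, lift_appList]
    have hMs' := forall₂_map hMs (fun a b hab => hab.2 d)
    simp only [lift]; split_ifs <;> exact Par.var _ hMs'
  · intro M M' Ms Ms' hM ihM hMs
    intro d
    rw [lift_appList, lift_appList]
    exact Par.lam (ihM (d+1)) (forall₂_map hMs (fun a b hab => hab.2 d))
  · intro M M' V V' Ms Ms' hV hV' hM ihM hVp ihV hMs
    intro d
    rw [lift_appList, lift_appList]
    simp only [lift]
    rw [lift_subst_high M' d 0 V' (by omega)]
    exact Par.beta (isValue_lift hV d) (isValue_lift hV' d) (ihM (d+1)) (ihV d)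
      (forall₂_map hMs (fun a b hab => hab.2 d))
  · intro M M' N N' L L' Ms Ms' hM ihM hN ihN hL ihL hMs
    intro d
    rw [lift_appList, lift_appList]
    simp only [lift]
    rw [show lift (d+1) (lift 0 L') = lift 0 (lift d L') from (lift_lift_le L' 0 d (by omega)).symm]
    exact Par.sigma1 (ihM (d+1)) (ihN d) (ihL d) (forall₂_map hMs (fun a b hab => hab.2 d))
  · intro V V' L L' N N' Ms Ms' hV hV' hVp ihV hL ihL hN ihN hMs
    intro d
    rw [lift_appList, lift_appList]
    simp only [lift]
    rw [show lift (d+1) (lift 0 V') = lift 0 (lift d V') from (lift_lift_le V' 0 d (by omega)).symm]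
    exact Par.sigma3 (isValue_lift hV d) (isValue_lift hV' d) (ihV d) (ihL (d+1)) (ihN d)
      (forall₂_map hMs (fun a b hab => hab.2 d))

theorem Par.subst_par {M N : Term} (h : Par M N) :
    ∀ k (V V' : Term), isValue V → isValue V' → Par V V' →
      Par (subst M k V) (subst N k V') := by
  refine Par.ind2
    (motive := fun M N => ∀ k (V V' : Term), isValue V → isValue V' → Par V V' →
      Par (subst M k V) (subst N k V')) ?_ ?_ ?_ ?_ ?_ h
  · intro x Ms Ms' hMs
    intro k V V' hV hV' hVV'
    rw [subst_appList, subst_appList]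
    have hMs' := forall₂_map hMs (fun a b hab => hab.2 k V V' hV hV' hVV')
    simp only [subst]; split_ifs
    · exact hVV'.appList_ext hMs'
    · exact Par.var _ hMs'
    · exact Par.var _ hMs'
  · intro M M' Ms Ms' hM ihM hMs
    intro k V V' hV hV' hVV'
    rw [subst_appList, subst_appList]
    exact Par.lam (ihM (k+1) _ _ (isValue_lift hV 0) (isValue_lift hV' 0) (hVV'.lift_par 0))
      (forall₂_map hMs (fun a b hab => hab.2 k V V' hV hV' hVV'))
  · intro M M' V0 V0' Ms Ms' hV0 hV0' hM ihM hV0p ihV0 hMs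
    intro k V V' hV hV' hVV'
    rw [subst_appList, subst_appList]
    simp only [subst]
    rw [subst_subst M' 0 k V0' V' (by omega)]
    exact Par.beta (isValue_subst hV0 k hV) (isValue_subst hV0' k hV')
      (ihM (k+1) _ _ (isValue_lift hV 0) (isValue_lift hV' 0) (hVV'.lift_par 0))
      (ihV0 k V V' hV hV' hVV')
      (forall₂_map hMs (fun a b hab => hab.2 k V V' hV hV' hVV'))
  · intro M M' N N' L L' Ms Ms' hM ihM hN ihN hL ihL hMs
    intro k V V' hV hV' hVV'
    rw [subst_appList, subst_appList]
    simp only [subst]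
    rw [show subst (lift 0 L') (k+1) (lift 0 V') = lift 0 (subst L' k V') from
      (lift_subst_low L' 0 k V' (by omega)).symm]
    exact Par.sigma1
      (ihM (k+1) _ _ (isValue_lift hV 0) (isValue_lift hV' 0) (hVV'.lift_par 0))
      (ihN k V V' hV hV' hVV') (ihL k V V' hV hV' hVV')
      (forall₂_map hMs (fun a b hab => hab.2 k V V' hV hV' hVV'))
  · intro V0 V0' L L' N N' Ms Ms' hV0 hV0' hV0p ihV0 hL ihL hN ihN hMs
    intro k V V' hV hV' hVV'
    rw [subst_appList, subst_appList]
    simp only [subst]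
    rw [show subst (lift 0 V0') (k+1) (lift 0 V') = lift 0 (subst V0' k V') from
      (lift_subst_low V0' 0 k V' (by omega)).symm]
    exact Par.sigma3 (isValue_subst hV0 k hV) (isValue_subst hV0' k hV')
      (ihV0 k V V' hV hV' hVV')
      (ihL (k+1) _ _ (isValue_lift hV 0) (isValue_lift hV' 0) (hVV'.lift_par 0))
      (ihN k V V' hV hV' hVV')
      (forall₂_map hMs (fun a b hab => hab.2 k V V' hV hV' hVV'))

/-! ### IPar lemmas -/

theorem IPar.to_par {M N : Term} (h : IPar M N) : Par M N := by
  induction h with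
  | lam h => exact Par.lam h .nil
  | var x => exact Par.var x .nil
  | right hV hV' hVV' hNN' hMs ih => exact par_value_head hV hVV' ih hMs

theorem IPar.value {M N : Term} (h : IPar M N) (hN : isValue N) : isValue M := by
  cases h with
  | lam _ => trivial
  | var x => trivial
  | right hV hV' hVV' hNN' hMs =>
    obtain ⟨C, D, hCD⟩ := appList_app_ex _ _ _
    rw [hCD] at hN; exact hN.elim

theorem headbeta_app {X N : Term} (h : HeadBeta X N) : ∃ A B, X = app A B := by
  cases h with
  | beta M V Ms _ => exact appList_app_ex _ _ _
  | right V Ms _ _ => exact appList_app_ex _ _ _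

theorem headsigma_app {X N : Term} (h : HeadSigma X N) : ∃ A B, X = app A B := by
  cases h with
  | sigma1 M N L Ms => exact appList_app_ex _ _ _
  | sigma3 V L N Ms _ => exact appList_app_ex _ _ _
  | right V Ms _ _ => exact appList_app_ex _ _ _

end Term

open Term Relation in
theorem postponement {M L : Term} (h : IPar M L) :
    (∀ N, HeadBeta L N → ∃ L2, HeadBeta M L2 ∧ Par L2 N) ∧
    (∀ N, HeadSigma L N → ∃ L2, HeadSigma M L2 ∧ Par L2 N) := by
  induction h with
  | lam hP =>
    constructor <;> intro N0 hstep
    · obtain ⟨A, B, hAB⟩ := headbeta_app hstep; exact absurd hAB (by simp)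
    · obtain ⟨A, B, hAB⟩ := headsigma_app hstep; exact absurd hAB (by simp)
  | var x =>
    constructor <;> intro N0 hstep
    · obtain ⟨A, B, hAB⟩ := headbeta_app hstep; exact absurd hAB (by simp)
    · obtain ⟨A, B, hAB⟩ := headsigma_app hstep; exact absurd hAB (by simp)
  | right hV hV' hVV' hNN' hMs ih =>
    rename_i V V' N N' Ms Ms'
    constructor
    · intro N0 hstep
      generalize hE : appList (app V' N') Ms' = Y at hstep
      cases hstep with
      | beta M1 W Ks hW =>
        obtain ⟨e1, e2, e3⟩ := spine_eq_cons hV' (show isValue (Term.lam M1) from trivial) hE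
        subst e1; subst e2; subst e3
        rcases par_value_inv hV hVV' with ⟨x, rfl, hx⟩ | ⟨M2, M1', rfl, e5, hM⟩
        · exact absurd hx (by simp)
        · injection e5 with e6
          subst e6
          have hNval := hNN'.value hW
          have hNW := hNN'.to_par
          exact ⟨appList (subst M2 0 N) Ms, HeadBeta.beta M2 N Ms hNval,
            Par.appList_ext (Par.subst_par hM 0 _ _ hNval hW hNW) hMs⟩
      | right W Ks hW hstep' =>
        rename_i N1 N1'
        obtain ⟨e1, e2, e3⟩ := spine_eq_cons hV' hW hE
        subst e1; subst e2; subst e3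
        obtain ⟨L2, hL2, hPar⟩ := ih.1 N1' hstep'
        exact ⟨appList (app V L2) Ms, HeadBeta.right V Ms hV hL2,
          par_value_head hV hVV' hPar hMs⟩
    · intro N0 hstep
      generalize hE : appList (app V' N') Ms' = Y at hstep
      cases hstep with
      | sigma1 M1 N1 L1 Ks =>
        obtain ⟨e1, e2⟩ := spine_eq (value_not_app hV')
          (value_not_app (show isValue (Term.lam M1) from trivial))
          (N' :: Ms') (N1 :: L1 :: Ks) hE
        subst e1
        injection e2 with e3 e4
        subst e3; subst e4
        cases hMs with
        | cons hL0 hKs =>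
          rename_i L0 Ks0
          rcases par_value_inv hV hVV' with ⟨x, rfl, hx⟩ | ⟨M2, M1', rfl, e5, hM⟩
          · exact absurd hx (by simp)
          · injection e5 with e6
            subst e6
            exact ⟨appList (app (Term.lam (app M2 (lift 0 L0))) N) Ks0,
              HeadSigma.sigma1 M2 N L0 Ks0,
              Par.lam (par_app hM (hL0.lift_par 0)) (.cons hNN'.to_par hKs)⟩
      | sigma3 W L1 N1 Ks hW =>
        obtain ⟨e1, e2, e3⟩ := spine_eq_cons hV' hW hE
        subst e1; subst e3
        generalize hE2 : Term.app (Term.lam L1) N1 = Z at e2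
        subst e2
        cases hNN' with
        | lam hP => exact absurd hE2 (by simp)
        | var x => exact absurd hE2 (by simp)
        | right hU hU' hUU' hPP' hNs =>
          rename_i U U' P P' Ns Ns'
          obtain ⟨f1, f2, f3⟩ :=
            spine_eq_cons (Ms := ([] : List Term)) (show isValue (Term.lam L1) from trivial) hU' hE2
          subst f1; subst f2; subst f3
          cases hNs with
          | nil =>
            rcases par_value_inv hU hUU' with ⟨x, rfl, hx⟩ | ⟨L2, L1', rfl, e5, hL⟩
            · exact absurd hx (by simp)
            · injection e5 with e6
              subst e6
              exact ⟨appList (app (Term.lam (app (lift 0 V) L2)) P) Ms,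
                HeadSigma.sigma3 V L2 P Ms hV,
                Par.lam (par_app (hVV'.lift_par 0) hL) (.cons hPP'.to_par hMs)⟩
      | right W Ks hW hstep' =>
        rename_i N1 N1'
        obtain ⟨e1, e2, e3⟩ := spine_eq_cons hV' hW hE
        subst e1; subst e2; subst e3
        obtain ⟨L2, hL2, hPar⟩ := ih.2 N1' hstep'
        exact ⟨appList (app V L2) Ms, HeadSigma.right V Ms hV hL2,
          par_value_head hV hVV' hPar hMs⟩
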